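/- Let R be a commutative Bezout ring of stable range 2 and let a ∈ R be a regular element. Then a is an avoidable element if and only if the quotient ring R/aR is a clean ring. -/

import Mathlib

/-- A regular element: a nonzero element that is not a zero divisor. -/
def IsRegularElem {R : Type*} [CommRing R] (a : R) : Prop :=
  a ≠ 0 ∧ ∀ x : R, a * x = 0 → x = 0

/-- Stable range 2. -/
def HasStableRange2 (R : Type*) [CommRing R] : Prop :=
  ∀ a b c : R, Ideal.span {a, b, c} = ⊤ →
    ∃ x y : R, Ideal.span {a + c * x, b + c * y} = ⊤

/-- Stable range 1. -/
def HasStableRange1 (S : Type*) [CommRing S] : Prop :=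
  ∀ a b : S, Ideal.span {a, b} = ⊤ → ∃ y : S, IsUnit (a + b * y)

/-- Inpseudo-irreducible element: any factorization is comaximal. -/
def IsInpseudoIrreducible {R : Type*} [CommRing R] (a : R) : Prop :=
  ∀ b c : R, a = b * c → Ideal.span {b, c} = ⊤

/-- Pseudo-irreducible element. -/
def IsPseudoIrreducible {R : Type*} [CommRing R] (a : R) : Prop :=
  ∀ b c : R, a = b * c → ¬IsUnit b → ¬IsUnit c → Ideal.span {b, c} ≠ ⊤

/-- Adequate element of a Bezout ring. -/
def IsAdequateElem {R : Type*} [CommRing R] (a : R) : Prop :=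
  ∀ b : R, ∃ r s : R, a = r * s ∧ Ideal.span {r, b} = ⊤ ∧
    ∀ s' : R, ¬IsUnit s' → s' ∣ s → Ideal.span {s', b} ≠ ⊤

/-- Avoidable element. -/
def IsAvoidableElem {R : Type*} [CommRing R] (a : R) : Prop :=
  ∀ b c : R, Ideal.span {a, b, c} = ⊤ →
    ∃ r s : R, a = r * s ∧ Ideal.span {r, b} = ⊤ ∧ Ideal.span {s, c} = ⊤ ∧
      Ideal.span {r, s} = ⊤

/-- Gelfand element. -/
def IsGelfandElem {R : Type*} [CommRing R] (a : R) : Prop :=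
  ∀ b c : R, Ideal.span {a, b, c} = ⊤ →
    ∃ r s : R, a = r * s ∧ Ideal.span {r, b} = ⊤ ∧ Ideal.span {s, c} = ⊤

/-- Semipotent element. -/
def IsSemipotentElem {R : Type*} [CommRing R] (a : R) : Prop :=
  ∀ b : R,
    Ideal.Quotient.mk (Ideal.span {a}) b ∉
      Ideal.jacobson (⊥ : Ideal (R ⧸ Ideal.span ({a} : Set R))) →
    ∃ r s : R, ¬IsUnit r ∧ ¬IsUnit s ∧ a = r * s ∧
      Ideal.span {r, b} = ⊤ ∧ Ideal.span {r, s} = ⊤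

/-- Gelfand ring. -/
def IsGelfandRing (S : Type*) [CommRing S] : Prop :=
  ∀ a b : S, a + b = 1 → ∃ r s : S, (1 + a * r) * (1 + b * s) = 0

/-- Clean ring: every element is a unit plus an idempotent. -/
def IsCleanRing (S : Type*) [CommRing S] : Prop :=
  ∀ a : S, ∃ u e : S, IsUnit u ∧ IsIdempotentElem e ∧ a = u + e

/-- Von Neumann regular ring. -/
def IsVNRegularRing (S : Type*) [CommRing S] : Prop :=
  ∀ a : S, ∃ x : S, a = a * x * a

/-- Semiregular ring: S/J(S) is von Neumann regular and idempotents lift modulo J(S). -/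
def IsSemiregularRing (S : Type*) [CommRing S] : Prop :=
  IsVNRegularRing (S ⧸ Ideal.jacobson (⊥ : Ideal S)) ∧
  ∀ x : S, IsIdempotentElem (Ideal.Quotient.mk (Ideal.jacobson (⊥ : Ideal S)) x) →
    ∃ e : S, IsIdempotentElem e ∧
      Ideal.Quotient.mk (Ideal.jacobson (⊥ : Ideal S)) e =
        Ideal.Quotient.mk (Ideal.jacobson (⊥ : Ideal S)) x

/-- Semipotent ring: every principal ideal not contained in the Jacobson radical
contains a nonzero idempotent. -/
def IsSemipotentRing (S : Type*) [CommRing S] : Prop :=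
  ∀ b : S, ¬(Ideal.span {b} ≤ Ideal.jacobson (⊥ : Ideal S)) →
    ∃ e : S, e ≠ 0 ∧ IsIdempotentElem e ∧ e ∈ Ideal.span ({b} : Set S)

/-- Indecomposable ring: the only idempotents are 0 and 1. -/
def IsIndecomposableRing (S : Type*) [CommRing S] : Prop :=
  ∀ e : S, IsIdempotentElem e → e = 0 ∨ e = 1

/-- Semihereditary ring: every finitely generated ideal is projective. -/
def IsSemihereditaryRing (R : Type*) [CommRing R] : Prop :=
  ∀ I : Ideal R, I.FG → Module.Projective R I

/-- Regular range 1. -/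
def HasRegularRange1 (R : Type*) [CommRing R] : Prop :=
  ∀ a b : R, Ideal.span {a, b} = ⊤ → ∃ t : R, IsRegularElem (a + b * t)

/-- Gelfand range 1. -/
def HasGelfandRange1 (R : Type*) [CommRing R] : Prop :=
  ∀ a b : R, Ideal.span {a, b} = ⊤ → ∃ t : R, IsGelfandElem (a + b * t)

/-- A rectangular matrix admits diagonal reduction with successive divisibility
of the diagonal entries. -/
def AdmitsDiagReduction {R : Type*} [CommRing R] {n m : ℕ}
    (A : Matrix (Fin n) (Fin m) R) : Prop :=
  ∃ (P : Matrix (Fin n) (Fin n) R) (Q : Matrix (Fin m) (Fin m) R),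
    IsUnit P ∧ IsUnit Q ∧
    (∀ (i : Fin n) (j : Fin m), (i : ℕ) ≠ (j : ℕ) → (P * A * Q) i j = 0) ∧
    (∀ (k : ℕ) (hn : k + 1 < n) (hm : k + 1 < m),
      (P * A * Q) ⟨k, Nat.lt_of_succ_lt hn⟩ ⟨k, Nat.lt_of_succ_lt hm⟩ ∣
        (P * A * Q) ⟨k + 1, hn⟩ ⟨k + 1, hm⟩)

/-- Elementary divisor ring: every matrix admits diagonal reduction. -/
def IsElementaryDivisorRing (R : Type*) [CommRing R] : Prop :=
  ∀ (n m : ℕ) (A : Matrix (Fin n) (Fin m) R), AdmitsDiagReduction A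

/-! Avoidable ⇒ clean: for `x`, avoidability with `b = x`, `c = 1 - x` yields a comaximal
factorization `a = r * s` with `r` coprime to `x` and `s` coprime to `1 - x`; the Chinese
remainder idempotent (`1` mod `r`, `0` mod `s`) gives the exchange property of `R/aR` at `x`,
and exchange characterizes clean rings.

Clean ⇒ avoidable: write `1 = u * a + v * b + w * c`; exchange at `v * b` gives an idempotent
`E` of `R/aR` with `E ∈ (a, b)` and `1 - E ∈ (a, c)`. In a Bezout ring `gcd(a, 1 - E)` and
`gcd(a, E)` are comaximal, so their product divides `a`; it is also divisible by `a` because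
`E * (1 - E) ∈ (a)`. For regular `a` the two are then associates, which gives the factorization
avoidability demands. -/

section

open Ideal

variable {R : Type*} [CommRing R]

theorem span_pair_eq_top_iff_isCoprime (x y : R) : span {x, y} = ⊤ ↔ IsCoprime x y := by
  rw [span_insert, sup_eq_top_iff_isCoprime]

theorem span_pair_eq_top_of_dvd {a b r y : R} (hra : r ∣ a) (hry : r ∣ y)
    (hy : 1 - y ∈ span {a, b}) : span {r, b} = ⊤ := by
  obtain ⟨m, rfl⟩ := hra
  obtain ⟨k, rfl⟩ := hry
  obtain ⟨p, q, hpq⟩ := mem_span_pair.1 hy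
  exact (eq_top_iff_one _).2 <| mem_span_pair.2 ⟨k + p * m, q, by linear_combination hpq⟩

theorem isCleanRing_iff_exchange :
    IsCleanRing R ↔ ∀ x : R, ∃ e : R, IsIdempotentElem e ∧ x ∣ e ∧ 1 - x ∣ 1 - e := by
  constructor
  · intro h x
    obtain ⟨_, f, ⟨u, rfl⟩, hf, rfl⟩ := h x
    refine ⟨1 - f, hf.one_sub, ⟨↑u⁻¹ * (1 - f), ?_⟩, ⟨-(↑u⁻¹ * f), ?_⟩⟩
    · linear_combination (f - 1) * u.inv_mul + ↑u⁻¹ * hf.eq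
    · linear_combination -f * u.inv_mul - ↑u⁻¹ * hf.eq
  · intro h x
    obtain ⟨e, he, ⟨s, hs⟩, ⟨t, ht⟩⟩ := h x
    refine ⟨x * e - (1 - x) * (1 - e), 1 - e, IsUnit.of_mul_eq_one (s * e - t * (1 - e)) ?_,
      he.one_sub, by ring⟩
    linear_combination (3 + x * t + (1 - x) * s) * he.eq - e ^ 2 * hs - (1 - e) ^ 2 * ht

theorem IsRegularElem.associated_of_dvd {a b : R} (ha : IsRegularElem a) (hba : b ∣ a)
    (hab : a ∣ b) : Associated b a := by
  obtain ⟨m, hm⟩ := hba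
  obtain ⟨n, hn⟩ := hab
  have hmn : m * n = 1 := by
    linear_combination -ha.2 (1 - n * m) (by linear_combination hm + m * hn)
  exact ⟨Units.mkOfMulEqOne m n hmn, hm.symm⟩

theorem IsRegularElem.exists_eq_mul_of_dvd_mul_one_sub [IsBezout R] {a E : R}
    (ha : IsRegularElem a) (hE : a ∣ E * (1 - E)) :
    ∃ r s : R, a = r * s ∧ r ∣ 1 - E ∧ s ∣ E := by
  obtain ⟨k, hk⟩ := IsBezout.gcd_dvd_right a (1 - E)
  obtain ⟨k', hk'⟩ := IsBezout.gcd_dvd_right a E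
  have hrs : IsCoprime (IsBezout.gcd a (1 - E)) (IsBezout.gcd a E) :=
    ⟨k, k', by linear_combination -hk - hk'⟩
  have hdvd : a ∣ IsBezout.gcd a (1 - E) * IsBezout.gcd a E := by
    obtain ⟨p, q, hpq⟩ := IsBezout.gcd_eq_sum a (1 - E)
    obtain ⟨p', q', hpq'⟩ := IsBezout.gcd_eq_sum a E
    obtain ⟨w, hw⟩ := hE
    exact ⟨p * p' * a + p * q' * E + q * p' * (1 - E) + q * q' * w, by
      rw [← hpq, ← hpq']; linear_combination q * q' * hw⟩
  obtain ⟨u, hu⟩ := ha.associated_of_dvd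
    (hrs.mul_dvd (IsBezout.gcd_dvd_left _ _) (IsBezout.gcd_dvd_left _ _)) hdvd
  exact ⟨IsBezout.gcd a (1 - E) * u, IsBezout.gcd a E, by linear_combination -hu,
    Units.mul_right_dvd.2 (IsBezout.gcd_dvd_right _ _), IsBezout.gcd_dvd_right _ _⟩

theorem mem_span_pair_of_mk_dvd_mk {a b y : R}
    (h : Ideal.Quotient.mk (span {a}) b ∣ Ideal.Quotient.mk (span {a}) y) :
    y ∈ span {a, b} := by
  obtain ⟨t, ht⟩ := h
  obtain ⟨t, rfl⟩ := Ideal.Quotient.mk_surjective t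
  obtain ⟨w, hw⟩ := (Ideal.Quotient.eq_zero_iff_dvd a (y - b * t)).1 (by simp [ht])
  exact mem_span_pair.2 ⟨w, t, by linear_combination -hw⟩

theorem IsAvoidableElem.isCleanRing_quotient {a : R} (h : IsAvoidableElem a) :
    IsCleanRing (R ⧸ span {a}) := by
  set π := Ideal.Quotient.mk (span {a})
  refine isCleanRing_iff_exchange.2 fun x ↦ ?_
  obtain ⟨x, rfl⟩ := Ideal.Quotient.mk_surjective x
  have hax : span {a, x, 1 - x} = ⊤ :=
    (eq_top_iff_one _).2 <| mem_span_insert.2 ⟨0, 1, mem_span_pair.2 ⟨1, 1, by ring⟩, by ring⟩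
  obtain ⟨r, s, rfl, hrx, hsx, hrs⟩ := h x (1 - x) hax
  obtain ⟨γ, δ, hγδ⟩ := (span_pair_eq_top_iff_isCoprime r x).1 hrx
  obtain ⟨σ, τ, hστ⟩ := (span_pair_eq_top_iff_isCoprime s (1 - x)).1 hsx
  obtain ⟨α, β, hαβ⟩ := (span_pair_eq_top_iff_isCoprime r s).1 hrs
  -- the idempotent is `β * s`, which is `0` mod `s` and `1` mod `r`
  refine ⟨π (β * s), ?_, ⟨π (δ * β * s), ?_⟩, ⟨π (τ * α * r), ?_⟩⟩
  · rw [IsIdempotentElem, ← map_mul, Ideal.Quotient.eq, mem_span_singleton]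
    exact ⟨-(α * β), by linear_combination (β * s) * hαβ⟩
  · rw [← map_mul, Ideal.Quotient.eq, mem_span_singleton]
    exact ⟨γ * β, by linear_combination -(β * s) * hγδ⟩
  · rw [← map_one π, ← map_sub, ← map_sub, ← map_mul, Ideal.Quotient.eq, mem_span_singleton]
    exact ⟨α * σ, by linear_combination -hαβ - (α * r) * hστ⟩

theorem IsAvoidableElem.of_isCleanRing_quotient [IsBezout R] {a : R} (ha : IsRegularElem a)
    (h : IsCleanRing (R ⧸ span {a})) : IsAvoidableElem a := by
  intro b c habc
  set π := Ideal.Quotient.mk (span {a})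
  obtain ⟨u, z, hz, huz⟩ := mem_span_insert.1 ((eq_top_iff_one _).1 habc)
  obtain ⟨v, w, rfl⟩ := mem_span_pair.1 hz
  obtain ⟨e, he, hbe, hce⟩ := isCleanRing_iff_exchange.1 h (π (v * b))
  obtain ⟨E, rfl⟩ := Ideal.Quotient.mk_surjective e
  have hEb : E ∈ span {a, b} :=
    mem_span_pair_of_mk_dvd_mk <| (map_mul π v b ▸ dvd_mul_left _ _).trans hbe
  have hvw : 1 - π (v * b) = π c * π w := by
    rw [← map_one π, ← map_sub, ← map_mul, Ideal.Quotient.eq, mem_span_singleton]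
    exact ⟨u, by linear_combination huz⟩
  have hEc : 1 - E ∈ span {a, c} := by
    refine mem_span_pair_of_mk_dvd_mk ((dvd_mul_right _ (π w)).trans ?_)
    rw [map_sub, map_one, ← hvw]
    exact hce
  have hE : a ∣ E * (1 - E) := by
    rw [← Ideal.Quotient.eq_zero_iff_dvd, map_mul, map_sub, map_one]
    exact he.mul_one_sub_self
  obtain ⟨r, s, has, ⟨k, hk⟩, ⟨k', hk'⟩⟩ := ha.exists_eq_mul_of_dvd_mul_one_sub hE
  refine ⟨r, s, has, span_pair_eq_top_of_dvd ⟨s, has⟩ ⟨k, hk⟩ (by rwa [sub_sub_cancel]),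
    span_pair_eq_top_of_dvd ⟨r, has.trans (mul_comm r s)⟩ ⟨k', hk'⟩ hEc,
    (span_pair_eq_top_iff_isCoprime r s).2 ⟨k, k', by linear_combination -hk - hk'⟩⟩

end

theorem stmt11_general {R : Type*} [CommRing R] [IsBezout R]
    (a : R) (hreg : IsRegularElem a) :
    IsAvoidableElem a ↔ IsCleanRing (R ⧸ Ideal.span ({a} : Set R)) :=
  ⟨IsAvoidableElem.isCleanRing_quotient, IsAvoidableElem.of_isCleanRing_quotient hreg⟩

theorem stmt11 {R : Type*} [CommRing R] [IsBezout R] (hR : HasStableRange2 R)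
    (a : R) (hreg : IsRegularElem a) :
    IsAvoidableElem a ↔ IsCleanRing (R ⧸ Ideal.span ({a} : Set R)) :=
  stmt11_general a hreg
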